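/- Suppose 𝒜 satisfies the RIP with constant δ ∈ (0,1). If u_1 ∈ ℝ^{n1}, v_1 ∈ ℝ^{n2}, u_2 ∈ ℝ^{n1}, v_2 ∈ ℝ^{n2} satisfy ⟨u_1v_1ᵀ, u_2v_2ᵀ⟩_F = 0, then |⟨𝒜(u_1v_1ᵀ), 𝒜(u_2v_2ᵀ)⟩| ≤ δ·‖u_1v_1ᵀ‖_F·‖u_2v_2ᵀ‖_F. -/
import Mathlib


open MeasureTheory ProbabilityTheory Matrix Finset
open scoped BigOperators ENNReal NNReal RealInnerProductSpace

noncomputable section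

namespace ALSPaper

/-- View a plain vector as an element of Euclidean space. -/
def toE {n : ℕ} (x : Fin n → ℝ) : EuclideanSpace ℝ (Fin n) :=
  (WithLp.equiv 2 (Fin n → ℝ)).symm x

/-- View an element of Euclidean space as a plain vector. -/
def ofE {n : ℕ} (x : EuclideanSpace ℝ (Fin n)) : Fin n → ℝ :=
  WithLp.equiv 2 (Fin n → ℝ) x

/-- The first standard basis vector. -/
def e1 (n : ℕ) : EuclideanSpace ℝ (Fin n) :=
  toE fun i => if (i : ℕ) = 0 then 1 else 0

/-- Frobenius inner product. -/
def frobInner {n1 n2 : ℕ} (A B : Matrix (Fin n1) (Fin n2) ℝ) : ℝ :=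
  ∑ i, ∑ j, A i j * B i j

/-- Frobenius norm. -/
def frobNorm {n1 n2 : ℕ} (A : Matrix (Fin n1) (Fin n2) ℝ) : ℝ :=
  Real.sqrt (frobInner A A)

/-- The measurement operator. -/
def calA {n1 n2 m : ℕ} (A : Fin m → Matrix (Fin n1) (Fin n2) ℝ)
    (X : Matrix (Fin n1) (Fin n2) ℝ) : EuclideanSpace ℝ (Fin m) :=
  toE fun i => (Real.sqrt m)⁻¹ * frobInner (A i) X

/-- The adjoint of the measurement operator. -/
def calAdj {n1 n2 m : ℕ} (A : Fin m → Matrix (Fin n1) (Fin n2) ℝ)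
    (w : EuclideanSpace ℝ (Fin m)) : Matrix (Fin n1) (Fin n2) ℝ :=
  ∑ i, ((Real.sqrt m)⁻¹ * ofE w i) • A i

/-- The restricted isometry property (RIP) with constant `δ` (for rank ≤ 4). -/
def HasRIP {n1 n2 m : ℕ} (A : Fin m → Matrix (Fin n1) (Fin n2) ℝ) (δ : ℝ) : Prop :=
  ∀ Z : Matrix (Fin n1) (Fin n2) ℝ, Z.rank ≤ 4 →
    (1 - δ) * frobNorm Z ^ 2 ≤ ‖calA A Z‖ ^ 2 ∧ ‖calA A Z‖ ^ 2 ≤ (1 + δ) * frobNorm Z ^ 2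

/-- Component of `v` parallel to the first standard basis vector. -/
def par {n : ℕ} (v : EuclideanSpace ℝ (Fin n)) : EuclideanSpace ℝ (Fin n) :=
  ⟪e1 n, v⟫ • e1 n

/-- Component of `v` orthogonal to the first standard basis vector. -/
def perp {n : ℕ} (v : EuclideanSpace ℝ (Fin n)) : EuclideanSpace ℝ (Fin n) :=
  v - par v

/-- The "diagonal block" part of a measurement matrix. -/
def Dmat {n1 n2 : ℕ} (A : Matrix (Fin n1) (Fin n2) ℝ) : Matrix (Fin n1) (Fin n2) ℝ :=
  vecMulVec (ofE (e1 n1)) (ofE (e1 n1)) * A * vecMulVec (ofE (e1 n2)) (ofE (e1 n2))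
    + (1 - vecMulVec (ofE (e1 n1)) (ofE (e1 n1))) * A *
        (1 - vecMulVec (ofE (e1 n2)) (ofE (e1 n2)))

/-- The "off-diagonal block" part of a measurement matrix. -/
def Omat {n1 n2 : ℕ} (A : Matrix (Fin n1) (Fin n2) ℝ) : Matrix (Fin n1) (Fin n2) ℝ :=
  vecMulVec (ofE (e1 n1)) (ofE (e1 n1)) * A * (1 - vecMulVec (ofE (e1 n2)) (ofE (e1 n2)))
    + (1 - vecMulVec (ofE (e1 n1)) (ofE (e1 n1))) * A * vecMulVec (ofE (e1 n2)) (ofE (e1 n2))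

/-- The (1,1) entry of a matrix. -/
def ent11 {n1 n2 : ℕ} (A : Matrix (Fin n1) (Fin n2) ℝ) : ℝ :=
  frobInner (vecMulVec (ofE (e1 n1)) (ofE (e1 n2))) A

/-- Spectral (operator) norm of a matrix. -/
def specNorm {n1 n2 : ℕ} (M : Matrix (Fin n1) (Fin n2) ℝ) : ℝ :=
  ‖LinearMap.toContinuousLinearMap (Matrix.toEuclideanLin M)‖

/-- The normal equation for the least-squares update. -/
def NormalEq {n1 n2 m : ℕ} (A : Fin m → Matrix (Fin n1) (Fin n2) ℝ)
    (u : EuclideanSpace ℝ (Fin n1)) (v : EuclideanSpace ℝ (Fin n2)) : Prop :=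
  u = ⟪v, e1 n2⟫ • e1 n1 +
    toE (((vecMulVec (ofE u) (ofE v) - vecMulVec (ofE (e1 n1)) (ofE (e1 n2))) -
      calAdj A (calA A (vecMulVec (ofE u) (ofE v) - vecMulVec (ofE (e1 n1)) (ofE (e1 n2)))))
        *ᵥ ofE v)

/-- sin of the angle between two vectors. -/
def sinAngle {n : ℕ} (a b : EuclideanSpace ℝ (Fin n)) : ℝ :=
  Real.sqrt (1 - ⟪a, b⟫ ^ 2 / (‖a‖ ^ 2 * ‖b‖ ^ 2))

/-- `c_t` sequence. -/
def cseq (n2 t : ℕ) : ℝ := (1 + 1 / Real.log n2) ^ t - 1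

/-- ALS iterates. -/
def IsALS {n1 n2 m : ℕ} (A : Fin m → Matrix (Fin n1) (Fin n2) ℝ)
    (y : EuclideanSpace ℝ (Fin m)) (v0 : EuclideanSpace ℝ (Fin n2))
    (u : ℕ → EuclideanSpace ℝ (Fin n1)) (v : ℕ → EuclideanSpace ℝ (Fin n2))
    (uh : ℕ → EuclideanSpace ℝ (Fin n1)) (vh : ℕ → EuclideanSpace ℝ (Fin n2)) : Prop :=
  v 0 = v0 ∧
  ∀ t : ℕ,
    (∀ u' : EuclideanSpace ℝ (Fin n1),
      ‖y - calA A (vecMulVec (ofE (uh t)) (ofE (v t)))‖ ≤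
        ‖y - calA A (vecMulVec (ofE u') (ofE (v t)))‖) ∧
    u (t + 1) = ‖uh t‖⁻¹ • uh t ∧
    (∀ v' : EuclideanSpace ℝ (Fin n2),
      ‖y - calA A (vecMulVec (ofE (u (t + 1))) (ofE (vh t)))‖ ≤
        ‖y - calA A (vecMulVec (ofE (u (t + 1))) (ofE v'))‖) ∧
    v (t + 1) = ‖vh t‖⁻¹ • vh t

lemma frobInner_add_right {n1 n2 : ℕ} (A X Y : Matrix (Fin n1) (Fin n2) ℝ) :
    frobInner A (X + Y) = frobInner A X + frobInner A Y := by
  simp [frobInner, Matrix.add_apply, mul_add, Finset.sum_add_distrib]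
lemma frobInner_smul_right {n1 n2 : ℕ} (c : ℝ) (A X : Matrix (Fin n1) (Fin n2) ℝ) :
    frobInner A (c • X) = c * frobInner A X := by
  simp [frobInner, Matrix.smul_apply, Finset.mul_sum, mul_comm, mul_left_comm]
lemma frobInner_comm {n1 n2 : ℕ} (A B : Matrix (Fin n1) (Fin n2) ℝ) :
    frobInner A B = frobInner B A := by
  simp [frobInner, mul_comm]
lemma frobInner_self_nonneg {n1 n2 : ℕ} (A : Matrix (Fin n1) (Fin n2) ℝ) :
    0 ≤ frobInner A A :=
  Finset.sum_nonneg fun i _ => Finset.sum_nonneg fun j _ => mul_self_nonneg _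
lemma frobNorm_sq {n1 n2 : ℕ} (A : Matrix (Fin n1) (Fin n2) ℝ) :
    frobNorm A ^ 2 = frobInner A A := Real.sq_sqrt (frobInner_self_nonneg A)
lemma calA_add {n1 n2 m : ℕ} (A : Fin m → Matrix (Fin n1) (Fin n2) ℝ)
    (X Y : Matrix (Fin n1) (Fin n2) ℝ) :
    calA A (X + Y) = calA A X + calA A Y := by
  ext i; simp [calA, toE, frobInner_add_right, mul_add]
lemma calA_smul {n1 n2 m : ℕ} (A : Fin m → Matrix (Fin n1) (Fin n2) ℝ) (c : ℝ)
    (X : Matrix (Fin n1) (Fin n2) ℝ) :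
    calA A (c • X) = c • calA A X := by
  ext i; simp [calA, toE, frobInner_smul_right]; ring
lemma calA_zero {n1 n2 m : ℕ} (A : Fin m → Matrix (Fin n1) (Fin n2) ℝ) :
    calA A (0 : Matrix (Fin n1) (Fin n2) ℝ) = 0 := by
  ext i; simp [calA, toE, frobInner]
lemma smul_vecMulVec {n1 n2 : ℕ} (c : ℝ) (u : Fin n1 → ℝ) (v : Fin n2 → ℝ) :
    c • vecMulVec u v = vecMulVec (c • u) v := by
  ext i j; simp [vecMulVec, mul_assoc]
lemma rank_pair_le {n1 n2 : ℕ} (u w : Fin n1 → ℝ) (v z : Fin n2 → ℝ) :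
    (vecMulVec u v + vecMulVec w z).rank ≤ 4 := by
  set P : Matrix (Fin n1) (Fin 2) ℝ := Matrix.of fun i k => if k = 0 then u i else w i
  set Q : Matrix (Fin 2) (Fin n2) ℝ := Matrix.of fun k j => if k = 0 then v j else z j
  have hPQ : vecMulVec u v + vecMulVec w z = P * Q := by
    ext i j; simp [P, Q, Matrix.mul_apply, Fin.sum_univ_two, vecMulVec]
  rw [hPQ]
  calc (P * Q).rank ≤ P.rank := Matrix.rank_mul_le_left P Q
    _ ≤ Fintype.card (Fin 2) := Matrix.rank_le_card_width P
    _ ≤ 4 := by simp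
lemma frobNorm_eq_zero_iff {n1 n2 : ℕ} (X : Matrix (Fin n1) (Fin n2) ℝ) :
    frobNorm X = 0 ↔ X = 0 := by
  constructor
  · intro h
    have h2 : frobInner X X = 0 := by
      have := frobNorm_sq X; rw [h] at this; linarith
    ext i j
    have hsum := (Finset.sum_eq_zero_iff_of_nonneg
      (fun i _ => Finset.sum_nonneg fun j _ => mul_self_nonneg (X i j))).mp h2 i (by simp)
    have := (Finset.sum_eq_zero_iff_of_nonneg
      (fun j _ => mul_self_nonneg (X i j))).mp hsum j (by simp)
    simpa [mul_self_eq_zero] using this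
  · intro h; simp [h, frobNorm, frobInner]
lemma frobNorm_nonneg {n1 n2 : ℕ} (X : Matrix (Fin n1) (Fin n2) ℝ) : 0 ≤ frobNorm X :=
  Real.sqrt_nonneg _
lemma frobInner_sub_right {n1 n2 : ℕ} (A X Y : Matrix (Fin n1) (Fin n2) ℝ) :
    frobInner A (X - Y) = frobInner A X - frobInner A Y := by
  simp [frobInner, Matrix.sub_apply, mul_sub, Finset.sum_sub_distrib]
lemma calA_sub {n1 n2 m : ℕ} (A : Fin m → Matrix (Fin n1) (Fin n2) ℝ)
    (X Y : Matrix (Fin n1) (Fin n2) ℝ) :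
    calA A (X - Y) = calA A X - calA A Y := by
  ext i; simp [calA, toE, frobInner_sub_right, mul_sub]
lemma neg_vecMulVec {n1 n2 : ℕ} (u : Fin n1 → ℝ) (v : Fin n2 → ℝ) :
    vecMulVec (-u) v = -vecMulVec u v := by
  ext i j; simp [vecMulVec]
lemma frobInner_add_left {n1 n2 : ℕ} (X Y A : Matrix (Fin n1) (Fin n2) ℝ) :
    frobInner (X + Y) A = frobInner X A + frobInner Y A := by
  rw [frobInner_comm, frobInner_add_right, frobInner_comm A X, frobInner_comm A Y]
lemma frobInner_sub_left {n1 n2 : ℕ} (X Y A : Matrix (Fin n1) (Fin n2) ℝ) :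
    frobInner (X - Y) A = frobInner X A - frobInner Y A := by
  rw [frobInner_comm, frobInner_sub_right, frobInner_comm A X, frobInner_comm A Y]
lemma frobNorm_zero {n1 n2 : ℕ} : frobNorm (0 : Matrix (Fin n1) (Fin n2) ℝ) = 0 := by
  simp [frobNorm, frobInner]


/-- If `𝒜` satisfies the RIP with constant `δ ∈ (0,1)` and the rank-one matrices
`u₁v₁ᵀ` and `u₂v₂ᵀ` are orthogonal in the Frobenius inner product, then
`|⟨𝒜(u₁v₁ᵀ), 𝒜(u₂v₂ᵀ)⟩| ≤ δ‖u₁v₁ᵀ‖_F‖u₂v₂ᵀ‖_F`. -/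
theorem statement3 {n1 n2 m : ℕ} (A : Fin m → Matrix (Fin n1) (Fin n2) ℝ) (δ : ℝ)
    (hδ0 : 0 < δ) (hδ1 : δ < 1) (hRIP : HasRIP A δ)
    (u1 : EuclideanSpace ℝ (Fin n1)) (v1 : EuclideanSpace ℝ (Fin n2))
    (u2 : EuclideanSpace ℝ (Fin n1)) (v2 : EuclideanSpace ℝ (Fin n2))
    (horth : frobInner (vecMulVec (ofE u1) (ofE v1)) (vecMulVec (ofE u2) (ofE v2)) = 0) :
    |⟪calA A (vecMulVec (ofE u1) (ofE v1)), calA A (vecMulVec (ofE u2) (ofE v2))⟫|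
      ≤ δ * frobNorm (vecMulVec (ofE u1) (ofE v1)) * frobNorm (vecMulVec (ofE u2) (ofE v2)) := by
  set X := vecMulVec (ofE u1) (ofE v1) with hXdef
  set Y := vecMulVec (ofE u2) (ofE v2) with hYdef
  by_cases hX : frobNorm X = 0
  · have : X = 0 := (frobNorm_eq_zero_iff X).mp hX
    rw [this, calA_zero, frobNorm_zero]
    simp
  by_cases hY : frobNorm Y = 0
  · have : Y = 0 := (frobNorm_eq_zero_iff Y).mp hY
    rw [this, calA_zero, frobNorm_zero]
    simp
  have hXpos : 0 < frobNorm X := lt_of_le_of_ne (frobNorm_nonneg X) (Ne.symm hX)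
  have hYpos : 0 < frobNorm Y := lt_of_le_of_ne (frobNorm_nonneg Y) (Ne.symm hY)
  set a : ℝ := (frobNorm X)⁻¹ with ha
  set b : ℝ := (frobNorm Y)⁻¹ with hb
  have hapos : 0 < a := inv_pos.mpr hXpos
  have hbpos : 0 < b := inv_pos.mpr hYpos
  set X' := a • X with hX'
  set Y' := b • Y with hY'
  -- normalized norms
  have hIX' : frobInner X' X' = 1 := by
    rw [hX', frobInner_smul_right, frobInner_comm, frobInner_smul_right, frobInner_comm,
      ← frobNorm_sq]
    rw [ha]
    field_simp
  have hIY' : frobInner Y' Y' = 1 := by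
    rw [hY', frobInner_smul_right, frobInner_comm, frobInner_smul_right, frobInner_comm,
      ← frobNorm_sq]
    rw [hb]
    field_simp
  have hIXY' : frobInner X' Y' = 0 := by
    rw [hX', hY', frobInner_smul_right, frobInner_comm, frobInner_smul_right, frobInner_comm,
      horth]
    ring
  -- ranks
  have hrank_add : (X' + Y').rank ≤ 4 := by
    rw [hX', hY', hXdef, hYdef, smul_vecMulVec, smul_vecMulVec]
    exact rank_pair_le _ _ _ _
  have hrank_sub : (X' - Y').rank ≤ 4 := by
    have : X' - Y' = vecMulVec (a • ofE u1) (ofE v1) + vecMulVec (-(b • ofE u2)) (ofE v2) := by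
      rw [neg_vecMulVec, hX', hY', hXdef, hYdef, smul_vecMulVec, smul_vecMulVec,
        sub_eq_add_neg]
    rw [this]
    exact rank_pair_le _ _ _ _
  -- Frobenius norms of sum/diff
  have hYX' : frobInner Y' X' = 0 := by rw [frobInner_comm]; exact hIXY'
  have hadd : frobNorm (X' + Y') ^ 2 = 2 := by
    rw [frobNorm_sq]
    simp only [frobInner_add_right, frobInner_add_left, hIX', hIY', hIXY', hYX']
    ring
  have hsub : frobNorm (X' - Y') ^ 2 = 2 := by
    rw [frobNorm_sq]
    simp only [frobInner_sub_right, frobInner_sub_left, hIX', hIY', hIXY', hYX']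
    ring
  -- RIP bounds
  obtain ⟨hadd_lo, hadd_hi⟩ := hRIP (X' + Y') hrank_add
  obtain ⟨hsub_lo, hsub_hi⟩ := hRIP (X' - Y') hrank_sub
  rw [hadd] at hadd_lo hadd_hi
  rw [hsub] at hsub_lo hsub_hi
  rw [calA_add] at hadd_lo hadd_hi
  rw [calA_sub] at hsub_lo hsub_hi
  -- polarization
  have hpol_add : ‖calA A X' + calA A Y'‖ ^ 2
      = ‖calA A X'‖ ^ 2 + 2 * ⟪calA A X', calA A Y'⟫ + ‖calA A Y'‖ ^ 2 :=
    norm_add_sq_real _ _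
  have hpol_sub : ‖calA A X' - calA A Y'‖ ^ 2
      = ‖calA A X'‖ ^ 2 - 2 * ⟪calA A X', calA A Y'⟫ + ‖calA A Y'‖ ^ 2 :=
    norm_sub_sq_real _ _
  have hnormed : |⟪calA A X', calA A Y'⟫| ≤ δ := by
    rw [abs_le]
    constructor
    · linarith
    · linarith
  -- rescale
  have hscale : ⟪calA A X', calA A Y'⟫ = a * b * ⟪calA A X, calA A Y⟫ := by
    rw [hX', hY', calA_smul, calA_smul, real_inner_smul_left, real_inner_smul_right]
    ring
  rw [hscale, abs_mul, abs_of_pos (mul_pos hapos hbpos)] at hnormed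
  have hab : a * b = (frobNorm X * frobNorm Y)⁻¹ := by
    rw [ha, hb, mul_inv]
  rw [hab] at hnormed
  calc |⟪calA A X, calA A Y⟫|
      = (frobNorm X * frobNorm Y) * ((frobNorm X * frobNorm Y)⁻¹ * |⟪calA A X, calA A Y⟫|) := by
        field_simp
    _ ≤ (frobNorm X * frobNorm Y) * δ := by
        apply mul_le_mul_of_nonneg_left hnormed (le_of_lt (mul_pos hXpos hYpos))
    _ = δ * frobNorm X * frobNorm Y := by ring


end ALSPaper
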